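/- Robust legitimate-SINR constraint as an LMI: Let T be an n×n Hermitian complex matrix, h̄ ∈ ℂⁿ, ε > 0, and η ∈ ℝ. Then the following are equivalent: (i) for every Δ ∈ ℂⁿ with ‖Δ‖² ≤ ε², the real number (h̄ + Δ)ᴴ T (h̄ + Δ) is at least η; (ii) there exists λ ≥ 0 such that the (n+1)×(n+1) block matrix [[λ I + T, T h̄], [(T h̄)ᴴ, h̄ᴴ T h̄ − λ ε² − η]] is positive semidefinite. -/

import Mathlib

/-!
Write `q x = xᴴ T x`. By homogeneity in the last coordinate (and a limit where it vanishes), the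
block matrix is positive semidefinite iff its quadratic form is nonnegative at every `(Δ, 1)`,
that is iff `q (h̄ + Δ) - η ≥ λ (ε² - ‖Δ‖²)` for all `Δ`. So the theorem is the S-lemma for a
ball, and its nontrivial direction comes from the trust-region subproblem. A minimiser `x₀` of
`q` on the closed ball around `h̄` exists by compactness. If it is interior, the first- and
second-order conditions give `T x₀ = 0` and `T ⪰ 0`, so `λ = 0` works. If it lies on the
sphere, the first-order conditions along inward directions force `T x₀ = -λ (x₀ - h̄)` with
`λ ≥ 0`, and comparing `q` with its values on the rest of the sphere gives `T + λ ⪰ 0`. In both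
cases `x₀` minimises the Lagrangian `q x + λ (‖x - h̄‖² - ε²)` globally, with minimum value
`q x₀ ≥ η`.
-/

open Matrix ComplexOrder

/-- The Hermitian block matrix `[[A, b], [bᴴ, c]]`. -/
noncomputable def blockMat {n : ℕ} (A : Matrix (Fin n) (Fin n) ℂ) (b : Fin n → ℂ) (c : ℝ) :
    Matrix (Fin n ⊕ Fin 1) (Fin n ⊕ Fin 1) ℂ :=
  Matrix.fromBlocks A (Matrix.of fun i _ => b i) (Matrix.of fun _ j => star (b j))
    (Matrix.of fun _ _ => (c : ℂ))

open Filter Topology Metric RCLike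
open scoped InnerProductSpace

theorem nonneg_of_continuousAt_of_eventually_nonneg {f : ℝ → ℝ} (hf : ContinuousAt f 0)
    (h : ∀ᶠ s in 𝓝[>] 0, 0 ≤ f s) : 0 ≤ f 0 :=
  ge_of_tendsto (hf.tendsto.mono_left nhdsWithin_le_nhds) h

section InnerProductSpace

variable {𝕜 E : Type*} [RCLike 𝕜] [NormedAddCommGroup E] [InnerProductSpace 𝕜 E]

theorem LinearMap.re_inner_smul_map_smul (T : E →ₗ[𝕜] E) (x : E) (t : ℝ) :
    re ⟪(t : 𝕜) • x, T ((t : 𝕜) • x)⟫_𝕜 = t ^ 2 * re ⟪x, T x⟫_𝕜 := by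
  simp only [map_smul, inner_smul_real_left, inner_smul_real_right, smul_re]
  ring

variable {T : E →ₗ[𝕜] E}

namespace LinearMap.IsSymmetric

theorem re_inner_add_map_add (hT : T.IsSymmetric) (x u : E) :
    re ⟪x + u, T (x + u)⟫_𝕜 = re ⟪x, T x⟫_𝕜 + 2 * re ⟪u, T x⟫_𝕜 + re ⟪u, T u⟫_𝕜 := by
  have hcross : re ⟪x, T u⟫_𝕜 = re ⟪u, T x⟫_𝕜 := by rw [← hT, inner_re_symm]
  simp only [map_add, inner_add_left, inner_add_right, hcross]
  ring

theorem re_inner_add_smul_map_add_smul (hT : T.IsSymmetric) (x w : E) (t : ℝ) :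
    re ⟪x + (t : 𝕜) • w, T (x + (t : 𝕜) • w)⟫_𝕜 =
      re ⟪x, T x⟫_𝕜 + t * (2 * re ⟪w, T x⟫_𝕜 + t * re ⟪w, T w⟫_𝕜) := by
  rw [hT.re_inner_add_map_add, T.re_inner_smul_map_smul, inner_smul_real_left, smul_re]
  ring

end LinearMap.IsSymmetric

theorem norm_add_real_smul_sq (x w : E) (t : ℝ) :
    ‖x + (t : 𝕜) • w‖ ^ 2 = ‖x‖ ^ 2 + t * (2 * re ⟪x, w⟫_𝕜 + t * ‖w‖ ^ 2) := by
  rw [norm_add_sq (𝕜 := 𝕜), inner_smul_real_right, smul_re, norm_smul, norm_ofReal, mul_pow, sq_abs]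
  ring

theorem IsMinOn.re_inner_map_nonneg (hT : T.IsSymmetric) {K : Set E} {x₀ w : E}
    (hmin : IsMinOn (fun x => re ⟪x, T x⟫_𝕜) K x₀)
    (hw : ∀ᶠ t : ℝ in 𝓝[>] 0, x₀ + (t : 𝕜) • w ∈ K) : 0 ≤ re ⟪w, T x₀⟫_𝕜 := by
  have key : 0 ≤ 2 * re ⟪w, T x₀⟫_𝕜 + 0 * re ⟪w, T w⟫_𝕜 := by
    refine nonneg_of_continuousAt_of_eventually_nonneg
      (f := fun t => 2 * re ⟪w, T x₀⟫_𝕜 + t * re ⟪w, T w⟫_𝕜) (by fun_prop) ?_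
    filter_upwards [hw, self_mem_nhdsWithin] with t htK (ht : 0 < t)
    have hle : re ⟪x₀, T x₀⟫_𝕜 ≤ re ⟪x₀ + (t : 𝕜) • w, T (x₀ + (t : 𝕜) • w)⟫_𝕜 := hmin htK
    rw [hT.re_inner_add_smul_map_add_smul] at hle
    exact nonneg_of_mul_nonneg_right (by linarith) ht
  linarith

theorem eventually_add_smul_mem_closedBall_of_mem_ball {h x : E} {ε : ℝ} (hx : x ∈ ball h ε)
    (w : E) : ∀ᶠ t : ℝ in 𝓝[>] 0, x + (t : 𝕜) • w ∈ closedBall h ε := by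
  have hlim : Tendsto (fun t : ℝ => x + (t : 𝕜) • w) (𝓝 0) (𝓝 x) := by
    simpa using (((continuous_ofReal (K := 𝕜)).smul continuous_const).const_add x).tendsto (0 : ℝ)
  exact nhdsWithin_le_nhds <|
    (hlim.eventually (isOpen_ball.mem_nhds hx)).mono fun _ ht => ball_subset_closedBall ht

theorem eventually_add_smul_mem_closedBall_of_re_inner_neg {h x w : E} {ε : ℝ}
    (hx : x ∈ closedBall h ε) (hw : re ⟪x - h, w⟫_𝕜 < 0) :
    ∀ᶠ t : ℝ in 𝓝[>] 0, x + (t : 𝕜) • w ∈ closedBall h ε := by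
  rw [mem_closedBall, dist_eq_norm] at hx
  have hlim : Tendsto (fun t : ℝ => 2 * re ⟪x - h, w⟫_𝕜 + t * ‖w‖ ^ 2) (𝓝 0)
      (𝓝 (2 * re ⟪x - h, w⟫_𝕜 + 0 * ‖w‖ ^ 2)) :=
    (by fun_prop : Continuous fun t : ℝ => 2 * re ⟪x - h, w⟫_𝕜 + t * ‖w‖ ^ 2).tendsto 0
  filter_upwards [nhdsWithin_le_nhds (hlim.eventually (gt_mem_nhds (by linarith))),
    self_mem_nhdsWithin] with t hneg (ht : 0 < t)
  rw [mem_closedBall, dist_eq_norm, add_sub_right_comm]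
  refine (pow_le_pow_iff_left₀ (norm_nonneg _) ((norm_nonneg _).trans hx) two_ne_zero).mp ?_
  rw [norm_add_real_smul_sq]
  nlinarith [pow_le_pow_left₀ (norm_nonneg _) hx 2]

theorem exists_nonneg_add_smul_eq_zero_of_re_inner_nonneg {d g : E} (hd : d ≠ 0)
    (h : ∀ w, re ⟪d, w⟫_𝕜 < 0 → 0 ≤ re ⟪w, g⟫_𝕜) : ∃ μ : ℝ, 0 ≤ μ ∧ g + (μ : 𝕜) • d = 0 := by
  have hd2 : 0 < ‖d‖ ^ 2 := by positivity
  set μ := -re ⟪d, g⟫_𝕜 / ‖d‖ ^ 2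
  have hμ : μ * ‖d‖ ^ 2 = -re ⟪d, g⟫_𝕜 := div_mul_cancel₀ _ hd2.ne'
  -- `p` is the component of `g` orthogonal to `d`; testing `h` on `-p - s • d` with `s → 0⁺`
  -- shows `‖p‖ ^ 2 ≤ 0`.
  set p := g + (μ : 𝕜) • d
  have hdp : re ⟪d, p⟫_𝕜 = 0 := by
    simp only [p, inner_add_right, inner_smul_real_right, map_add, smul_re,
      inner_self_eq_norm_sq]
    linarith
  refine ⟨μ, nonneg_of_mul_nonneg_left ?_ hd2, ?_⟩
  · have := h (-d) (by simp [hd])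
    simp only [inner_neg_left, map_neg] at this
    linarith
  · have key : 0 ≤ -‖p‖ ^ 2 + 0 * (μ * ‖d‖ ^ 2) := by
      refine nonneg_of_continuousAt_of_eventually_nonneg
        (f := fun s => -‖p‖ ^ 2 + s * (μ * ‖d‖ ^ 2)) (by fun_prop) ?_
      filter_upwards [self_mem_nhdsWithin] with s (hs : 0 < s)
      have hg : g = p - (μ : 𝕜) • d := by simp [p]
      have := h (-p - (s : 𝕜) • d) ?_
      · have hpd : re ⟪p, d⟫_𝕜 = 0 := by rw [inner_re_symm, hdp]
        rw [hg] at this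
        simp only [inner_sub_left, inner_sub_right, inner_neg_left, inner_smul_real_left,
          inner_smul_real_right, map_sub, map_neg, smul_re, inner_self_eq_norm_sq, hpd, hdp]
          at this
        linarith
      · simp only [inner_sub_right, inner_neg_right, inner_smul_real_right, map_sub, map_neg,
          smul_re, inner_self_eq_norm_sq, hdp]
        nlinarith
    exact norm_eq_zero.mp (by nlinarith [norm_nonneg p])

theorem LinearMap.IsSymmetric.re_inner_map_self_nonneg_of_forall_norm_add_eq {S : E →ₗ[𝕜] E}
    (hS : S.IsSymmetric) {d : E} (hd : d ≠ 0)
    (h : ∀ u, ‖d + u‖ = ‖d‖ → 0 ≤ re ⟪u, S u⟫_𝕜) (w : E) : 0 ≤ re ⟪w, S w⟫_𝕜 := by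
  have transversal : ∀ v, re ⟪d, v⟫_𝕜 ≠ 0 → 0 ≤ re ⟪v, S v⟫_𝕜 := by
    intro v hv
    have hv0 : 0 < ‖v‖ ^ 2 := by
      have : v ≠ 0 := by rintro rfl; simp at hv
      positivity
    -- `d + s • v` is the second point where the line through `d` along `v` meets the sphere.
    set s := -2 * re ⟪d, v⟫_𝕜 / ‖v‖ ^ 2
    have hs : s ≠ 0 := div_ne_zero (by simpa using hv) hv0.ne'
    have hsv : s * ‖v‖ ^ 2 = -2 * re ⟪d, v⟫_𝕜 := div_mul_cancel₀ _ hv0.ne'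
    have hu := h ((s : 𝕜) • v) <| by
      refine (sq_eq_sq₀ (norm_nonneg _) (norm_nonneg _)).mp ?_
      rw [norm_add_real_smul_sq]
      linear_combination s * hsv
    rw [S.re_inner_smul_map_smul] at hu
    exact nonneg_of_mul_nonneg_right hu (by positivity)
  by_cases hw : re ⟪d, w⟫_𝕜 = 0
  swap
  · exact transversal w hw
  have key : 0 ≤ re ⟪w, S w⟫_𝕜 + 0 * (2 * re ⟪d, S w⟫_𝕜 + 0 * re ⟪d, S d⟫_𝕜) := by
    refine nonneg_of_continuousAt_of_eventually_nonneg
      (f := fun s => re ⟪w, S w⟫_𝕜 + s * (2 * re ⟪d, S w⟫_𝕜 + s * re ⟪d, S d⟫_𝕜))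
      (by fun_prop) ?_
    filter_upwards [self_mem_nhdsWithin] with s (hs : 0 < s)
    rw [← hS.re_inner_add_smul_map_add_smul]
    refine transversal _ ?_
    simp only [inner_add_right, inner_smul_real_right, map_add, smul_re, inner_self_eq_norm_sq, hw]
    positivity
  simpa using key

theorem re_inner_eq_of_add_smul_eq_zero {g d : E} {μ : ℝ} (h : g + (μ : 𝕜) • d = 0) (u : E) :
    re ⟪u, g⟫_𝕜 = -(μ * re ⟪d, u⟫_𝕜) := by
  rw [eq_neg_of_add_eq_zero_left h, inner_neg_right, inner_smul_real_right, map_neg, smul_re,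
    inner_re_symm]

theorem re_inner_add_smul_id_apply (T : E →ₗ[𝕜] E) (μ : ℝ) (w : E) :
    re ⟪w, (T + (μ : 𝕜) • LinearMap.id : E →ₗ[𝕜] E) w⟫_𝕜 = re ⟪w, T w⟫_𝕜 + μ * ‖w‖ ^ 2 := by
  rw [LinearMap.add_apply, LinearMap.smul_apply, LinearMap.id_apply, inner_add_right,
    inner_smul_real_right, map_add, smul_re, inner_self_eq_norm_sq]

/-- The Moré–Sorensen conditions certifying that `x₀` minimises `re ⟪x, T x⟫` on
`closedBall h ε`, with Lagrange multiplier `μ`. -/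
structure IsTrustRegionMultiplier (T : E →ₗ[𝕜] E) (h : E) (ε : ℝ) (x₀ : E) (μ : ℝ) : Prop where
  nonneg : 0 ≤ μ
  stationary : T x₀ + (μ : 𝕜) • (x₀ - h) = 0
  complementary : μ * (ε ^ 2 - ‖x₀ - h‖ ^ 2) = 0
  re_inner_map_add_nonneg : ∀ w, 0 ≤ re ⟪w, T w⟫_𝕜 + μ * ‖w‖ ^ 2

theorem IsTrustRegionMultiplier.re_inner_map_le (hT : T.IsSymmetric) {h x₀ : E} {ε μ : ℝ}
    (hμ : IsTrustRegionMultiplier T h ε x₀ μ) (x : E) :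
    re ⟪x₀, T x₀⟫_𝕜 ≤ re ⟪x, T x⟫_𝕜 + μ * (‖x - h‖ ^ 2 - ε ^ 2) := by
  set u := x - x₀
  have hQ := hT.re_inner_add_map_add x₀ u
  have hN := norm_add_sq (𝕜 := 𝕜) (x₀ - h) u
  have hgrad := re_inner_eq_of_add_smul_eq_zero hμ.stationary u
  rw [add_sub_cancel] at hQ
  rw [sub_add_sub_cancel'] at hN
  linear_combination hμ.re_inner_map_add_nonneg u - hQ - 2 * hgrad - μ * hN + hμ.complementary

theorem isTrustRegionMultiplier_zero_of_mem_ball (hT : T.IsSymmetric) {h x₀ : E} {ε : ℝ}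
    (hx₀ : x₀ ∈ ball h ε) (hmin : IsMinOn (fun x => re ⟪x, T x⟫_𝕜) (closedBall h ε) x₀) :
    IsTrustRegionMultiplier T h ε x₀ 0 := by
  have hfeas := eventually_add_smul_mem_closedBall_of_mem_ball (𝕜 := 𝕜) hx₀
  have hgrad : T x₀ = 0 := by
    have := hmin.re_inner_map_nonneg hT (hfeas (-T x₀))
    rw [inner_neg_left, map_neg, inner_self_eq_norm_sq, neg_nonneg] at this
    exact norm_eq_zero.mp (by nlinarith [norm_nonneg (T x₀)])
  refine ⟨le_rfl, by simp [hgrad], zero_mul _, fun w => ?_⟩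
  obtain ⟨t, htK, ht : 0 < t⟩ := ((hfeas w).and self_mem_nhdsWithin).exists
  have hle : re ⟪x₀, T x₀⟫_𝕜 ≤ re ⟪x₀ + (t : 𝕜) • w, T (x₀ + (t : 𝕜) • w)⟫_𝕜 := hmin htK
  simp only [hT.re_inner_add_smul_map_add_smul, hgrad, inner_zero_right, map_zero] at hle
  simpa using nonneg_of_mul_nonneg_right (nonneg_of_mul_nonneg_right (by linarith) ht) ht

theorem exists_isTrustRegionMultiplier_of_mem_sphere (hT : T.IsSymmetric) {h x₀ : E} {ε : ℝ}
    (hε : 0 < ε) (hx₀ : x₀ ∈ sphere h ε)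
    (hmin : IsMinOn (fun x => re ⟪x, T x⟫_𝕜) (closedBall h ε) x₀) :
    ∃ μ, IsTrustRegionMultiplier T h ε x₀ μ := by
  rw [mem_sphere, dist_eq_norm] at hx₀
  have hd : x₀ - h ≠ 0 := norm_pos_iff.mp (hx₀ ▸ hε)
  obtain ⟨μ, hμ, hstat⟩ := exists_nonneg_add_smul_eq_zero_of_re_inner_nonneg hd fun w hw =>
    hmin.re_inner_map_nonneg hT <| eventually_add_smul_mem_closedBall_of_re_inner_neg
      (by rw [mem_closedBall, dist_eq_norm, hx₀]) hw
  refine ⟨μ, hμ, hstat, by rw [hx₀, sub_self, mul_zero], fun w => ?_⟩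
  have hS : (T + (μ : 𝕜) • LinearMap.id).IsSymmetric :=
    hT.add (LinearMap.IsSymmetric.id.smul (conj_ofReal μ))
  -- On the sphere `‖u‖ ^ 2 = -2 re ⟪x₀ - h, u⟫`, so the first-order term of `q (x₀ + u) - q x₀`
  -- equals `μ ‖u‖ ^ 2`.
  have hsphere (u : E) (hu : ‖x₀ - h + u‖ = ‖x₀ - h‖) :
      0 ≤ re ⟪u, (T + (μ : 𝕜) • LinearMap.id : E →ₗ[𝕜] E) u⟫_𝕜 := by
    have hle : re ⟪x₀, T x₀⟫_𝕜 ≤ re ⟪x₀ + u, T (x₀ + u)⟫_𝕜 :=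
      hmin (by rw [mem_closedBall, dist_eq_norm, add_sub_right_comm, hu, hx₀])
    have hN := norm_add_sq (𝕜 := 𝕜) (x₀ - h) u
    rw [hu] at hN
    rw [hT.re_inner_add_map_add, re_inner_eq_of_add_smul_eq_zero hstat u] at hle
    rw [re_inner_add_smul_id_apply]
    linear_combination hle + μ * hN
  simpa only [re_inner_add_smul_id_apply] using
    hS.re_inner_map_self_nonneg_of_forall_norm_add_eq hd hsphere w

variable [FiniteDimensional 𝕜 E]

theorem exists_isTrustRegionMultiplier (hT : T.IsSymmetric) (h : E) {ε : ℝ} (hε : 0 < ε) :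
    ∃ x₀ ∈ closedBall h ε, ∃ μ, IsTrustRegionMultiplier T h ε x₀ μ := by
  have hcont : Continuous fun x => re ⟪x, T x⟫_𝕜 := by
    have := T.continuous_of_finiteDimensional
    fun_prop
  have := FiniteDimensional.proper_rclike 𝕜 E
  obtain ⟨x₀, hx₀, hmin⟩ := (isCompact_closedBall h ε).exists_isMinOn
    (nonempty_closedBall.mpr hε.le) hcont.continuousOn
  refine ⟨x₀, hx₀, ?_⟩
  rcases (mem_closedBall.mp hx₀).lt_or_eq with hlt | heq
  · exact ⟨0, isTrustRegionMultiplier_zero_of_mem_ball hT hlt hmin⟩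
  · exact exists_isTrustRegionMultiplier_of_mem_sphere hT hε heq hmin

theorem LinearMap.IsSymmetric.forall_mem_closedBall_le_iff (hT : T.IsSymmetric) (h : E) {ε : ℝ}
    (hε : 0 < ε) (η : ℝ) :
    (∀ x ∈ closedBall h ε, η ≤ re ⟪x, T x⟫_𝕜) ↔
      ∃ μ : ℝ, 0 ≤ μ ∧ ∀ x, η + μ * (ε ^ 2 - ‖x - h‖ ^ 2) ≤ re ⟪x, T x⟫_𝕜 := by
  constructor
  · intro H
    obtain ⟨x₀, hx₀, μ, hμ⟩ := exists_isTrustRegionMultiplier hT h hε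
    exact ⟨μ, hμ.nonneg, fun x => by linarith [H x₀ hx₀, hμ.re_inner_map_le hT x]⟩
  · rintro ⟨μ, hμ, H⟩ x hx
    rw [mem_closedBall, dist_eq_norm] at hx
    have : 0 ≤ μ * (ε ^ 2 - ‖x - h‖ ^ 2) :=
      mul_nonneg hμ (sub_nonneg.mpr (pow_le_pow_left₀ (norm_nonneg _) hx 2))
    linarith [H x]

end InnerProductSpace

section Matrix

open WithLp

variable {ι 𝕜 : Type*} [Fintype ι] [DecidableEq ι] [RCLike 𝕜] {T : Matrix ι ι 𝕜}

theorem Matrix.inner_toLp_toEuclideanLin_toLp (T : Matrix ι ι 𝕜) (u v : ι → 𝕜) :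
    ⟪toLp 2 u, toEuclideanLin T (toLp 2 v)⟫_𝕜 = star u ⬝ᵥ T *ᵥ v := by
  rw [toEuclideanLin, toLpLin_toLp, toLin'_apply, EuclideanSpace.inner_toLp_toLp, dotProduct_comm]

theorem Matrix.IsHermitian.re_star_add_dotProduct_mulVec_add (hT : T.IsHermitian) (x y : ι → 𝕜) :
    re (star (x + y) ⬝ᵥ T *ᵥ (x + y)) =
      re (star x ⬝ᵥ T *ᵥ x) + 2 * re (star y ⬝ᵥ T *ᵥ x) + re (star y ⬝ᵥ T *ᵥ y) := by
  simpa only [← toLp_add, inner_toLp_toEuclideanLin_toLp] using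
    (isSymmetric_toEuclideanLin_iff.mpr hT).re_inner_add_map_add (toLp 2 x) (toLp 2 y)

theorem Matrix.IsHermitian.forall_le_iff_exists_multiplier (hT : T.IsHermitian) (h : ι → 𝕜)
    {ε : ℝ} (hε : 0 < ε) (η : ℝ) :
    (∀ Δ : ι → 𝕜, ∑ i, ‖Δ i‖ ^ 2 ≤ ε ^ 2 → η ≤ re (star (h + Δ) ⬝ᵥ T *ᵥ (h + Δ))) ↔
      ∃ μ : ℝ, 0 ≤ μ ∧ ∀ Δ : ι → 𝕜,
        η + μ * (ε ^ 2 - ∑ i, ‖Δ i‖ ^ 2) ≤ re (star (h + Δ) ⬝ᵥ T *ᵥ (h + Δ)) := by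
  let e : (ι → 𝕜) ≃ EuclideanSpace 𝕜 ι := (Equiv.addLeft h).trans (WithLp.equiv 2 _).symm
  have hnorm (Δ : ι → 𝕜) : ‖e Δ - toLp 2 h‖ ^ 2 = ∑ i, ‖Δ i‖ ^ 2 := by
    simp [e, EuclideanSpace.norm_sq_eq]
  have hmem (Δ : ι → 𝕜) : e Δ ∈ closedBall (toLp 2 h) ε ↔ ∑ i, ‖Δ i‖ ^ 2 ≤ ε ^ 2 := by
    rw [mem_closedBall, dist_eq_norm, ← hnorm,
      pow_le_pow_iff_left₀ (norm_nonneg _) hε.le two_ne_zero]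
  have key := (isSymmetric_toEuclideanLin_iff.mpr hT).forall_mem_closedBall_le_iff (toLp 2 h) hε η
  have hquad (Δ : ι → 𝕜) :
      re ⟪e Δ, toEuclideanLin T (e Δ)⟫_𝕜 = re (star (h + Δ) ⬝ᵥ T *ᵥ (h + Δ)) :=
    congrArg re (inner_toLp_toEuclideanLin_toLp T _ _)
  simpa only [← e.forall_congr_right, hmem, hnorm, hquad] using key

omit [DecidableEq ι] in
theorem Matrix.re_star_dotProduct_self (v : ι → 𝕜) : re (star v ⬝ᵥ v) = ∑ i, ‖v i‖ ^ 2 := by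
  simp [dotProduct, RCLike.conj_mul]

theorem Matrix.re_star_dotProduct_smul_one_add_mulVec (T : Matrix ι ι 𝕜) (μ : ℝ) (v : ι → 𝕜) :
    re (star v ⬝ᵥ ((μ : 𝕜) • 1 + T) *ᵥ v) = μ * ∑ i, ‖v i‖ ^ 2 + re (star v ⬝ᵥ T *ᵥ v) := by
  rw [add_mulVec, smul_mulVec, one_mulVec, dotProduct_add, dotProduct_smul, smul_eq_mul, map_add,
    re_ofReal_mul, re_star_dotProduct_self]

end Matrix

theorem Matrix.star_smul_dotProduct_mulVec_smul {ι R : Type*} [Fintype ι] [CommSemiring R]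
    [StarRing R] (M : Matrix ι ι R) (t : R) (x : ι → R) :
    star (t • x) ⬝ᵥ M *ᵥ (t • x) = star t * t * (star x ⬝ᵥ M *ᵥ x) := by
  rw [mulVec_smul, star_smul, smul_dotProduct, dotProduct_smul, smul_eq_mul, smul_eq_mul]
  ring

section blockMat

variable {n : ℕ} {A : Matrix (Fin n) (Fin n) ℂ}

theorem blockMat_isHermitian (hA : A.IsHermitian) (b : Fin n → ℂ) (c : ℝ) :
    (blockMat A b c).IsHermitian := by
  refine hA.fromBlocks ?_ ?_
  · ext; simp
  · ext; simp

theorem star_dotProduct_blockMat_mulVec (A : Matrix (Fin n) (Fin n) ℂ) (b : Fin n → ℂ) (c : ℝ)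
    (y : Fin n → ℂ) :
    star (Sum.elim y 1) ⬝ᵥ blockMat A b c *ᵥ Sum.elim y 1 =
      star y ⬝ᵥ A *ᵥ y + star y ⬝ᵥ b + star b ⬝ᵥ y + c := by
  simp [blockMat, mulVec, dotProduct, mul_add, Finset.sum_add_distrib]
  ring

theorem blockMat_posSemidef_iff (hA : A.IsHermitian) (b : Fin n → ℂ) (c : ℝ) :
    (blockMat A b c).PosSemidef ↔
      ∀ y, 0 ≤ (star y ⬝ᵥ A *ᵥ y).re + 2 * (star y ⬝ᵥ b).re + c := by
  set M := blockMat A b c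
  have hM : M.IsHermitian := blockMat_isHermitian hA b c
  have hre (y : Fin n → ℂ) : (star (Sum.elim y 1) ⬝ᵥ M *ᵥ Sum.elim y 1).re =
      (star y ⬝ᵥ A *ᵥ y).re + 2 * (star y ⬝ᵥ b).re + c := by
    have hswap : star b ⬝ᵥ y = star (star y ⬝ᵥ b) := by rw [star_dotProduct]
    rw [star_dotProduct_blockMat_mulVec, hswap]
    simp only [Complex.add_re, Complex.star_def, Complex.conj_re, Complex.ofReal_re]
    ring
  have hnonneg {x : Fin n ⊕ Fin 1 → ℂ} (hx : 0 ≤ (star x ⬝ᵥ M *ᵥ x).re) :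
      0 ≤ star x ⬝ᵥ M *ᵥ x :=
    Complex.le_def.mpr ⟨hx, by simpa using (hM.im_star_dotProduct_mulVec_self x).symm⟩
  refine ⟨fun hpsd y => hre y ▸ (Complex.le_def.mp (hpsd.dotProduct_mulVec_nonneg _)).1,
    fun H => ?_⟩
  have htop (x : Fin n ⊕ Fin 1 → ℂ) (hx : x (Sum.inr 0) ≠ 0) : 0 ≤ star x ⬝ᵥ M *ᵥ x := by
    set t := x (Sum.inr 0)
    have hxt : x = t • Sum.elim (t⁻¹ • (x ∘ Sum.inl)) 1 := by
      ext (i | i)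
      · simp [hx]
      · simp [t, Subsingleton.elim i 0]
    rw [hxt, star_smul_dotProduct_mulVec_smul]
    exact mul_nonneg (star_mul_self_nonneg t) (hnonneg (by rw [hre]; exact H _))
  refine .of_dotProduct_mulVec_nonneg hM fun x => ?_
  by_cases hx : x (Sum.inr 0) = 0
  swap
  · exact htop x hx
  set e : Fin n ⊕ Fin 1 → ℂ := Pi.single (Sum.inr 0) 1
  have key : 0 ≤ (star (x + ((0 : ℝ) : ℂ) • e) ⬝ᵥ M *ᵥ (x + ((0 : ℝ) : ℂ) • e)).re := by
    refine nonneg_of_continuousAt_of_eventually_nonneg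
      (f := fun s : ℝ => (star (x + (s : ℂ) • e) ⬝ᵥ M *ᵥ (x + (s : ℂ) • e)).re) (by fun_prop) ?_
    filter_upwards [self_mem_nhdsWithin] with s (hs : 0 < s)
    refine (Complex.le_def.mp (htop _ ?_)).1
    simp [e, hx, hs.ne']
  exact hnonneg (by simpa using key)

end blockMat

/-- Robust legitimate-SINR constraint as an LMI. -/
theorem robust_sinr_lmi {n : ℕ} (T : Matrix (Fin n) (Fin n) ℂ) (hT : T.IsHermitian)
    (hbar : Fin n → ℂ) (ε : ℝ) (hε : 0 < ε) (η : ℝ) :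
    (∀ Δ : Fin n → ℂ, (∑ i, ‖Δ i‖ ^ 2) ≤ ε ^ 2 →
        η ≤ (star (hbar + Δ) ⬝ᵥ T *ᵥ (hbar + Δ)).re) ↔
      ∃ lam : ℝ, 0 ≤ lam ∧
        (blockMat ((lam : ℂ) • (1 : Matrix (Fin n) (Fin n) ℂ) + T) (T *ᵥ hbar)
          ((star hbar ⬝ᵥ T *ᵥ hbar).re - lam * ε ^ 2 - η)).PosSemidef := by
  have hball := hT.forall_le_iff_exists_multiplier hbar hε η
  simp only [RCLike.re_to_complex] at hball
  rw [hball]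
  refine exists_congr fun μ => and_congr_right fun _ => ?_
  have hA : ((μ : ℂ) • (1 : Matrix (Fin n) (Fin n) ℂ) + T).IsHermitian :=
    (isHermitian_one.smul (Complex.conj_ofReal μ)).add hT
  rw [blockMat_posSemidef_iff hA]
  refine forall_congr' fun Δ => ?_
  have hexpand := hT.re_star_add_dotProduct_mulVec_add hbar Δ
  have hshift : (star Δ ⬝ᵥ ((μ : ℂ) • 1 + T) *ᵥ Δ).re =
      μ * ∑ i, ‖Δ i‖ ^ 2 + (star Δ ⬝ᵥ T *ᵥ Δ).re :=
    re_star_dotProduct_smul_one_add_mulVec T μ Δ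
  simp only [RCLike.re_to_complex] at hexpand
  constructor <;> intro h <;> linarith
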